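/- Let d be an admissible ultra-metric on X̄ = X ∪ X⁻¹ ∪ {e}, and let R be any invariant ultra-metric on the free group F(X) that extends the metric d defined on X̄. Then for every w = x₀⋯xₙ ∈ F(X) and every match θ on {0,…,lh(w)−1}, ρ_u(w, w^θ) ≥ R(w,e). -/

import Mathlib

/-! Graev ultra-metrics on free groups (after Gao, Savchenko–Zarichnyi and
Shlossberg, "On Graev type ultra-metrics"). -/

namespace GraevStmt

variable {X : Type*}

/-- The alphabet `X̄ = X ∪ X⁻¹ ∪ {e}`: `none` is the letter `e`,
`some (x, true)` is the letter `x` and `some (x, false)` is the letter `x⁻¹`. -/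
abbrev Letter (X : Type*) := Option (X × Bool)

/-- The letter `e`. -/
def eL : Letter X := none

/-- The letter `x`, for `x ∈ X`. -/
def pos (x : X) : Letter X := some (x, true)

/-- The letter `x⁻¹`, for `x ∈ X`. -/
def neg (x : X) : Letter X := some (x, false)

/-- The formal inverse of a letter; `e⁻¹ = e` and `(x⁻¹)⁻¹ = x`. -/
def linv : Letter X → Letter X
  | none => none
  | some (x, b) => some (x, !b)

/-- Interpretation of a letter as an element of the free group `F(X)`. -/
def toF : Letter X → FreeGroup X
  | none => 1
  | some (x, b) => FreeGroup.mk [(x, b)]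

/-- The reduced word of a word `w ∈ W(X)` over the alphabet `X̄`, viewed as the
corresponding element of the free group `F(X)`. -/
def red (w : List (Letter X)) : FreeGroup X := (w.map toF).prod

/-- The canonical irreducible word over the alphabet `X̄` representing a given
element of the free group `F(X)`. -/
def wordOf [DecidableEq X] (w : FreeGroup X) : List (Letter X) :=
  w.toWord.map some

/-- `ρ_u(w, v)`: the maximum of the distances between corresponding letters of
two words of equal length. -/
def rho (d : Letter X → Letter X → ℝ) (w v : List (Letter X)) : ℝ :=
  (List.zipWith d w v).foldr max 0

/-- The Graev ultra-metric `δ_u` on `F(X)` associated with `d`: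
`δ_u(w, v) = inf {ρ_u(w*, v*) : lh(w*) = lh(v*), (w*)' = w, (v*)' = v}`. -/
noncomputable def graev (d : Letter X → Letter X → ℝ) (w v : FreeGroup X) : ℝ :=
  sInf {r : ℝ | ∃ w' v' : List (Letter X), w'.length = v'.length ∧
    red w' = w ∧ red v' = v ∧ r = rho d w' v'}

/-- `d` is an ultra-metric: symmetric, vanishing exactly on the diagonal and
satisfying the strong triangle inequality. -/
def IsUltraMetric {A : Type*} (d : A → A → ℝ) : Prop :=
  (∀ a b, d a b = d b a) ∧ (∀ a b, d a b = 0 ↔ a = b) ∧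
    ∀ a b c, d a c ≤ max (d a b) (d b c)

/-- An admissible ultra-metric on the alphabet `X̄`, i.e. an ultra-metric with
`d(x⁻¹, y⁻¹) = d(x, y)`, `d(x, e) = d(x⁻¹, e)` and `d(x⁻¹, y) = d(x, y⁻¹)`. -/
def IsAdmissible (d : Letter X → Letter X → ℝ) : Prop :=
  IsUltraMetric d ∧ (∀ x y : X, d (neg x) (neg y) = d (pos x) (pos y)) ∧
    (∀ x : X, d (pos x) eL = d (neg x) eL) ∧
    ∀ x y : X, d (neg x) (pos y) = d (pos x) (neg y)

/-- A function `R` on `F(X) × F(X)` is (two-sided) invariant if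
`R(uwv, uw'v) = R(w, w')` for all `u, v, w, w'`. -/
def IsInvariant (R : FreeGroup X → FreeGroup X → ℝ) : Prop :=
  ∀ u v w w' : FreeGroup X, R (u * w * v) (u * w' * v) = R w w'

/-- A match on `{0, …, n-1}`: an involution `θ` such that there are no
`i < j < θ(i) < θ(j)`. -/
def IsMatch {n : ℕ} (θ : Fin n → Fin n) : Prop :=
  (∀ i, θ (θ i) = i) ∧ ∀ i j : Fin n, ¬(i < j ∧ j < θ i ∧ θ i < θ j)

/-- The word `w^θ` associated with a word `w` and a match `θ`:
its `i`-th letter is `x_i` if `θ(i) > i`, `e` if `θ(i) = i`, and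
`x_{θ(i)}⁻¹` if `θ(i) < i`. -/
def matchWord (w : List (Letter X)) (θ : Fin w.length → Fin w.length) :
    List (Letter X) :=
  List.ofFn fun i => if i < θ i then w.get i
    else if θ i = i then eL else linv (w.get (θ i))

/-- `j₂(x, y) = x⁻¹y`. -/
def j2 (p : X × X) : FreeGroup X := (FreeGroup.of p.1)⁻¹ * FreeGroup.of p.2

/-- `j₂*(x, y) = xy⁻¹`. -/
def j2s (p : X × X) : FreeGroup X := FreeGroup.of p.1 * (FreeGroup.of p.2)⁻¹

/-- `ε̃ = ⋃_{w ∈ F(X)} w (j₂(ε) ∪ j₂*(ε)) w⁻¹` for `ε ⊆ X × X`. -/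
def tilde (S : Set (X × X)) : Set (FreeGroup X) :=
  ⋃ w : FreeGroup X, (fun g => w * g * w⁻¹) '' (j2 '' S ∪ j2s '' S)

/-- The extension of an ultra-metric `d` on `X` to the alphabet `X̄` determined
by a base point `x₀`: `d(x, e) = max {d(x, x₀), 1}`, `d(x⁻¹, y⁻¹) = d(x, y)`
and `d(x⁻¹, y) = d(x, y⁻¹) = max {d(x, e), d(y, e)}` for `x, y ∈ X ∪ {e}`. -/
def ext (d : X → X → ℝ) (x₀ : X) : Letter X → Letter X → ℝ
  | none, none => 0
  | some (x, _), none => max (d x x₀) 1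
  | none, some (y, _) => max (d y x₀) 1
  | some (x, true), some (y, true) => d x y
  | some (x, false), some (y, false) => d x y
  | some (x, _), some (y, _) => max (max (d x x₀) 1) (max (d y x₀) 1)

/-- The extension of an ultra-metric `d` of diameter at most `1` on `X` to the
alphabet `X̄`, with `d(x⁻¹, y⁻¹) = d(x, y)` and
`d(x⁻¹, y) = d(x, y⁻¹) = d(x, e) = d(x⁻¹, e) = 1`. -/
def extOne (d : X → X → ℝ) : Letter X → Letter X → ℝ
  | none, none => 0
  | some (x, true), some (y, true) => d x y
  | some (x, false), some (y, false) => d x y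
  | _, _ => 1

/-- The homomorphism `α : F(X) → ℤ` extending the constant map `X → {1} ⊆ ℤ`. -/
def alpha (w : FreeGroup X) : ℤ :=
  Multiplicative.toAdd ((FreeGroup.lift fun _ : X => Multiplicative.ofAdd (1 : ℤ)) w)

/-- `F(q_r) : F(X) → F(X/F_r)`, where `X/F_r` is the quotient of `X` by the
partition into open balls of radius `r` (for an ultra-metric the relation
`d x y < r` is an equivalence relation, so `Quot` of this relation is exactly
this quotient) and `q_r` is the quotient map. -/
def Fq (d : X → X → ℝ) (r : ℝ) :
    FreeGroup X →* FreeGroup (Quot fun x y : X => d x y < r) :=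
  FreeGroup.map (Quot.mk _)

/-- The Savchenko–Zarichnyi function `d̂` on `F(X) × F(X)`:
`d̂(v, w) = 1` if `α(v) ≠ α(w)`, and
`d̂(v, w) = inf {r > 0 : F(q_r)(v) = F(q_r)(w)}` if `α(v) = α(w)`. -/
noncomputable def dHat (d : X → X → ℝ) (v w : FreeGroup X) : ℝ :=
  if alpha v = alpha w then sInf {r : ℝ | 0 < r ∧ Fq d r v = Fq d r w} else 1

lemma toF_linv (a : Letter X) : toF (linv a) = (toF a)⁻¹ := by
  rcases a with _ | ⟨x, b⟩
  · simp [linv, toF]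
  · simp [linv, toF, FreeGroup.inv_mk, FreeGroup.invRev]

lemma red_cons (a : Letter X) (l : List (Letter X)) :
    red (a :: l) = toF a * red l := by simp [red]

lemma red_map_some (l : List (X × Bool)) : red (l.map some) = FreeGroup.mk l := by
  induction l with
  | nil => simp [red, FreeGroup.one_eq_mk]
  | cons p l ih =>
      rw [List.map_cons, red_cons, ih, toF, FreeGroup.mul_mk]
      rfl

/-- Key combinatorial lemma: a non-crossing matched word multiplies to `1`. -/
lemma key_prod (v : ℕ → FreeGroup X) (θ : ℕ → ℕ) :
    ∀ n a, (∀ i, a ≤ i → i < a + n → a ≤ θ i ∧ θ i < a + n) →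
    (∀ i, a ≤ i → i < a + n → θ (θ i) = i) →
    (∀ i j, a ≤ i → j < a + n → i < j → j < θ i → θ i < θ j → False) →
    (∀ i, a ≤ i → i < a + n → θ i = i → v i = 1) →
    (∀ i, a ≤ i → i < a + n → i < θ i → v (θ i) = (v i)⁻¹) →
    ((List.range' a n).map v).prod = 1 := by
  intro n
  induction n using Nat.strong_induction_on with
  | _ n ih =>
    intro a hmaps hinv hnc h1 h2
    rcases n with _ | m
    · simp
    obtain ⟨hka, hkb⟩ := hmaps a le_rfl (by omega)
    rcases eq_or_lt_of_le hka with hk | hk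
    · -- θ a = a
      rw [List.range'_succ, List.map_cons, List.prod_cons,
        h1 a le_rfl (by omega) hk.symm, one_mul]
      refine ih m (by omega) (a + 1) (fun i hi1 hi2 => ?_)
        (fun i hi1 hi2 => hinv i (by omega) (by omega))
        (fun i j hi hj => hnc i j (by omega) (by omega))
        (fun i hi1 hi2 => h1 i (by omega) (by omega))
        (fun i hi1 hi2 => h2 i (by omega) (by omega))
      obtain ⟨l, r⟩ := hmaps i (by omega) (by omega)
      have hne : θ i ≠ a := by
        intro h
        have e1 : θ a = i := by rw [← h]; exact hinv i (by omega) (by omega)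
        omega
      constructor <;> omega
    · -- a < θ a
      have hsub1 : ∀ i, a + 1 ≤ i → i < θ a → a + 1 ≤ θ i ∧ θ i < θ a := by
        intro i hi1 hi2
        obtain ⟨l, r⟩ := hmaps i (by omega) (by omega)
        have hne_a : θ i ≠ a := by
          intro h
          have e1 : θ a = i := by rw [← h]; exact hinv i (by omega) (by omega)
          omega
        have hne_k : θ i ≠ θ a := by
          intro h
          have e1 : θ (θ i) = i := hinv i (by omega) (by omega)
          have e2 : θ (θ a) = a := hinv a le_rfl (by omega)
          rw [h, e2] at e1
          omega
        have hngt : ¬ (θ a < θ i) := fun hgt =>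
          hnc a i le_rfl (by omega) (by omega) hi2 hgt
        constructor <;> omega
      have hsub2 : ∀ i, θ a + 1 ≤ i → i < a + (m + 1) →
          θ a + 1 ≤ θ i ∧ θ i < a + (m + 1) := by
        intro i hi1 hi2
        obtain ⟨l, r⟩ := hmaps i (by omega) hi2
        have hne_a : θ i ≠ a := by
          intro h
          have e1 : θ a = i := by rw [← h]; exact hinv i (by omega) hi2
          omega
        have hne_k : θ i ≠ θ a := by
          intro h
          have e1 : θ (θ i) = i := hinv i (by omega) hi2
          have e2 : θ (θ a) = a := hinv a le_rfl (by omega)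
          rw [h, e2] at e1
          omega
        have hnlt : ¬ (θ i < θ a) := by
          intro hlt
          have e1 : θ (θ i) = i := hinv i (by omega) hi2
          have := hsub1 (θ i) (by omega) hlt
          omega
        constructor <;> omega
      set k := θ a with hkdef
      set p := k - a - 1 with hpdef
      set q := a + m - k with hqdef
      have hp : a + 1 + p = k := by omega
      have hq : k + 1 + q = a + (m + 1) := by omega
      have hm : m = (q + 1) + p := by omega
      have hdecomp : List.range' a (m + 1) =
          a :: (List.range' (a + 1) p ++ (k :: List.range' (k + 1) q)) := by
        rw [List.range'_succ]
        congr 1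
        rw [hm, Nat.add_comm (q + 1) p, ← List.range'_append_1 (s := a + 1) (m := p) (n := q + 1), hp, List.range'_succ]
      have hP1 : ((List.range' (a + 1) p).map v).prod = 1 := by
        refine ih p (by omega) (a + 1)
          (fun i hi1 hi2 => by
            have := hsub1 i hi1 (by omega); omega)
          (fun i hi1 hi2 => hinv i (by omega) (by omega))
          (fun i j hi hj => hnc i j (by omega) (by omega))
          (fun i hi1 hi2 => h1 i (by omega) (by omega))
          (fun i hi1 hi2 => h2 i (by omega) (by omega))
      have hP2 : ((List.range' (k + 1) q).map v).prod = 1 := by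
        refine ih q (by omega) (k + 1)
          (fun i hi1 hi2 => by
            have := hsub2 i hi1 (by omega); omega)
          (fun i hi1 hi2 => hinv i (by omega) (by omega))
          (fun i j hi hj => hnc i j (by omega) (by omega))
          (fun i hi1 hi2 => h1 i (by omega) (by omega))
          (fun i hi1 hi2 => h2 i (by omega) (by omega))
      have hvk : v k = (v a)⁻¹ := h2 a le_rfl (by omega) hk
      rw [hdecomp]
      simp [List.prod_append, hP1, hP2, hvk]

/-- If `R` is an invariant ultra-metric extending `d` letterwise, then
`R` of the reduced words is at most `ρ_u` of the words. -/
lemma R_red_le_rho (d : Letter X → Letter X → ℝ)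
    (R : FreeGroup X → FreeGroup X → ℝ) (hRu : IsUltraMetric R)
    (hRi : IsInvariant R) (hRe : ∀ a b : Letter X, R (toF a) (toF b) = d a b) :
    ∀ u v : List (Letter X), u.length = v.length →
      R (red u) (red v) ≤ rho d u v := by
  intro u
  induction u with
  | nil =>
      intro v hv
      obtain rfl : v = [] := List.length_eq_zero_iff.mp hv.symm
      have : R (red ([] : List (Letter X))) (red ([] : List (Letter X))) = 0 :=
        (hRu.2.1 _ _).mpr rfl
      rw [this]
      simp [rho]
  | cons a u ihu =>
      intro v hv
      rcases v with _ | ⟨b, v⟩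
      · simp at hv
      simp only [List.length_cons, add_left_inj] at hv
      have h1 : R (red (a :: u)) (red (b :: v)) ≤
          max (R (red (a :: u)) (toF a * red v)) (R (toF a * red v) (red (b :: v))) :=
        hRu.2.2 _ _ _
      have e1 : R (red (a :: u)) (toF a * red v) = R (red u) (red v) := by
        have h := hRi (toF a) 1 (red u) (red v)
        rw [mul_one, mul_one] at h
        rw [red_cons, h]
      have e2 : R (toF a * red v) (red (b :: v)) = d a b := by
        have h := hRi 1 (red v) (toF a) (toF b)
        rw [one_mul, one_mul] at h
        rw [red_cons, h, hRe]
      have hrho : rho d (a :: u) (b :: v) = max (d a b) (rho d u v) := rfl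
      rw [hrho]
      calc R (red (a :: u)) (red (b :: v)) ≤ _ := h1
        _ ≤ max (rho d u v) (d a b) := by
            rw [e1, e2]
            exact max_le_max (ihu v hv) le_rfl
        _ = max (d a b) (rho d u v) := max_comm _ _

/-- The matched word associated with a non-crossing match reduces to `1`. -/
lemma red_ofFn_match_eq_one (n : ℕ) (g : Fin n → Letter X)
    (θ : Fin n → Fin n) (hθ : IsMatch θ) :
    red (List.ofFn fun i => if i < θ i then g i
      else if θ i = i then eL else linv (g (θ i))) = 1 := by
  classical
  set f : Fin n → Letter X := fun i => if i < θ i then g i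
    else if θ i = i then eL else linv (g (θ i)) with hf
  set v : ℕ → FreeGroup X := fun i => if h : i < n then toF (f ⟨i, h⟩) else 1 with hv
  set θ' : ℕ → ℕ := fun i => if h : i < n then (θ ⟨i, h⟩ : ℕ) else i with hθ'
  have hθ'lt : ∀ i (h : i < n), θ' i = (θ ⟨i, h⟩ : ℕ) := by
    intro i h; simp [hθ', dif_pos h]
  have hmaps : ∀ i, 0 ≤ i → i < 0 + n → 0 ≤ θ' i ∧ θ' i < 0 + n := by
    intro i _ hi
    rw [zero_add] at hi ⊢
    rw [hθ'lt i hi]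
    exact ⟨Nat.zero_le _, (θ ⟨i, hi⟩).isLt⟩
  have hinv : ∀ i, 0 ≤ i → i < 0 + n → θ' (θ' i) = i := by
    intro i _ hi
    rw [zero_add] at hi
    rw [hθ'lt i hi, hθ'lt _ (θ ⟨i, hi⟩).isLt]
    have he : (⟨(θ ⟨i, hi⟩ : ℕ), (θ ⟨i, hi⟩).isLt⟩ : Fin n) = θ ⟨i, hi⟩ := Fin.eta _ _
    rw [he, hθ.1]
  have hnc : ∀ i j, 0 ≤ i → j < 0 + n → i < j → j < θ' i → θ' i < θ' j → False := by
    intro i j _ hj hij hjθ hθθ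
    rw [zero_add] at hj
    have hi : i < n := lt_trans hij hj
    rw [hθ'lt i hi] at hjθ hθθ
    rw [hθ'lt j hj] at hθθ
    exact hθ.2 ⟨i, hi⟩ ⟨j, hj⟩ ⟨hij, hjθ, hθθ⟩
  have h1 : ∀ i, 0 ≤ i → i < 0 + n → θ' i = i → v i = 1 := by
    intro i _ hi hfix
    rw [zero_add] at hi
    rw [hθ'lt i hi] at hfix
    have hfixF : θ ⟨i, hi⟩ = ⟨i, hi⟩ := Fin.ext hfix
    have hfe : f ⟨i, hi⟩ = eL := by
      rw [hf]
      simp [hfixF]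
    simp [hv, dif_pos hi, hfe, eL, toF]
  have h2 : ∀ i, 0 ≤ i → i < 0 + n → i < θ' i → v (θ' i) = (v i)⁻¹ := by
    intro i _ hi hlt
    rw [zero_add] at hi
    rw [hθ'lt i hi] at hlt ⊢
    set j : Fin n := θ ⟨i, hi⟩ with hj
    have hjlt : (⟨i, hi⟩ : Fin n) < j := hlt
    have hθj : θ j = ⟨i, hi⟩ := by rw [hj, hθ.1]
    have hne1 : ¬ (j < θ j) := by
      rw [hθj]; exact Fin.lt_asymm hjlt
    have hne2 : θ j ≠ j := by
      rw [hθj]; intro h; rw [← h] at hjlt; exact lt_irrefl _ hjlt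
    have hfj : f j = linv (g ⟨i, hi⟩) := by
      rw [hf]
      simp only [hθj]
      rw [if_neg (Fin.lt_asymm hjlt), if_neg (ne_of_lt hjlt)]
    have hfi : f ⟨i, hi⟩ = g ⟨i, hi⟩ := by
      rw [hf]
      simp only [if_pos (show (⟨i, hi⟩ : Fin n) < θ ⟨i, hi⟩ from hjlt)]
    have hje : (⟨(j : ℕ), j.isLt⟩ : Fin n) = j := Fin.eta _ _
    rw [hv]
    simp only [dif_pos j.isLt, dif_pos hi, hje, hfj, hfi, toF_linv]
  have hkey := key_prod v θ' n 0 hmaps hinv hnc h1 h2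
  have hmapeq : (List.ofFn f).map toF = (List.range' 0 n).map v := by
    apply List.ext_getElem
    · simp
    · intro i hi1 hi2
      have hi : i < n := by simpa using hi1
      simp only [List.getElem_map, List.getElem_ofFn, List.getElem_range']
      rw [hv]
      simp [dif_pos hi]
  rw [red, hmapeq, hkey]

/-- Claim 1 of Theorem `grau`: if `R` is an invariant ultra-metric on `F(X)`
extending the admissible ultra-metric `d` on `X̄`, then for every
`w = x₀⋯xₙ ∈ F(X)` and every match `θ` on `{0, …, lh(w) - 1}` we have
`ρ_u(w, w^θ) ≥ R(w, e)`. -/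
theorem rho_match_ge {X : Type*} [Nonempty X] [DecidableEq X]
    (d : Letter X → Letter X → ℝ) (hd : IsAdmissible d)
    (R : FreeGroup X → FreeGroup X → ℝ) (hRu : IsUltraMetric R)
    (hRi : IsInvariant R) (hRe : ∀ a b : Letter X, R (toF a) (toF b) = d a b)
    (w : FreeGroup X) (θ : Fin (wordOf w).length → Fin (wordOf w).length)
    (hθ : IsMatch θ) :
    R w 1 ≤ rho d (wordOf w) (matchWord (wordOf w) θ) := by
  classical
  have hlen : (wordOf w).length = (matchWord (wordOf w) θ).length := by
    rw [matchWord, List.length_ofFn]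
  have hred1 : red (matchWord (wordOf w) θ) = 1 :=
    red_ofFn_match_eq_one (wordOf w).length ((wordOf w).get) θ hθ
  have hredL : red (wordOf w) = w := by
    rw [wordOf, red_map_some, FreeGroup.mk_toWord]
  calc R w 1 = R (red (wordOf w)) (red (matchWord (wordOf w) θ)) := by
        rw [hredL, hred1]
    _ ≤ rho d (wordOf w) (matchWord (wordOf w) θ) :=
        R_red_le_rho d R hRu hRi hRe _ _ hlen

end GraevStmt
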